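/- Let k, l be positive integers. The inequality R_k + R_l ≤ R_{k+l−1} holds if and only if for all x, y with R_{k−1} ≤ x < R_k and R_{l−1} ≤ y < R_l, one has π_R(x + y) ≤ π_R(x) + π_R(y). -/

import Mathlib

open Real Filter

/-- Prime-counting function at a real argument. -/
noncomputable def pi' (x : ℝ) : ℕ := Nat.primeCounting ⌊x⌋₊

/-- The n-th Ramanujan prime: smallest positive integer R such that
π(x) − π(x/2) ≥ n for all real x ≥ R. -/
noncomputable def ramanujanPrime (n : ℕ) : ℕ :=
  sInf {R : ℕ | 0 < R ∧ ∀ x : ℝ, (R : ℝ) ≤ x → n ≤ pi' x - pi' (x / 2)}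

/-- A number is a Ramanujan prime if it is `ramanujanPrime n` for some `n ≥ 1`. -/
def IsRamanujanPrime (R : ℕ) : Prop := ∃ n : ℕ, 1 ≤ n ∧ ramanujanPrime n = R

/-- Ramanujan-prime-counting function. -/
noncomputable def piR (x : ℝ) : ℕ := {R : ℕ | IsRamanujanPrime R ∧ (R : ℝ) ≤ x}.ncard

/-- The n-th derived Ramanujan prime. -/
noncomputable def dRamanujanPrime (n : ℕ) : ℕ :=
  sInf {R : ℕ | 0 < R ∧ ∀ x : ℝ, (R : ℝ) ≤ x → n ≤ piR x - piR (x / 2)}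

/-- A number is a derived Ramanujan prime. -/
def IsDRamanujanPrime (R : ℕ) : Prop := ∃ n : ℕ, 1 ≤ n ∧ dRamanujanPrime n = R

/-- Derived-Ramanujan-prime-counting function. -/
noncomputable def piR' (x : ℝ) : ℕ := {R : ℕ | IsDRamanujanPrime R ∧ (R : ℝ) ≤ x}.ncard

/-
Everything rests on `π(2n) - π(n) → ∞`, which makes every `R_n` exist: this is Erdős's proof
of Bertrand's postulate with the primes in `(n, 2n]` kept as an exponent,
`C(2n, n) ≤ (2n)^√(2n) · 4^(2n/3) · (2n)^(π(2n) - π(n))`, played against `4^n < n · C(2n, n)`.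
The `R_n` are then strictly increasing, so `π_R(x) = j` exactly on `[R_j, R_{j+1})`.
For `x ∈ [R_{k-1}, R_k)` and `y ∈ [R_{l-1}, R_l)` the inequality
`π_R(x + y) ≤ π_R(x) + π_R(y)` therefore says `x + y < R_{k+l-1}`, and taking `x`, `y` just
below `R_k`, `R_l` turns this into `R_k + R_l ≤ R_{k+l-1}`.
-/

open Asymptotics Finset
open Nat (primeCounting centralBinom)

theorem isLittleO_sqrt_add_const_mul_log (d : ℝ) :
    (fun y : ℝ => (√y + d) * log y) =o[atTop] id := by
  have hsqrt : (fun y : ℝ => √y * log y) =o[atTop] id := by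
    refine ((isBigO_refl sqrt atTop).mul_isLittleO
      (isLittleO_log_rpow_atTop one_half_pos)).congr' .rfl ?_
    filter_upwards [eventually_ge_atTop 0] with y hy
    rw [← sqrt_eq_rpow, mul_self_sqrt hy, id]
  simpa only [add_mul] using hsqrt.add (isLittleO_log_id_atTop.const_mul_left d)

theorem eventually_mul_rpow_mul_pow_le_four_rpow (c : ℕ) :
    ∀ᶠ x : ℝ in atTop, x * (2 * x) ^ √(2 * x) * 4 ^ (2 * x / 3) * (2 * x) ^ c ≤ 4 ^ x := by
  have hbound := (tendsto_id.const_mul_atTop two_pos).eventually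
    ((isLittleO_sqrt_add_const_mul_log (c + 1)).bound (by positivity : 0 < log 4 / 6))
  filter_upwards [hbound, eventually_gt_atTop 0] with x hx hx0
  have h2x : 0 < 2 * x := by positivity
  have hlogx : log x ≤ log (2 * x) := log_le_log hx0 (by linarith)
  rw [id_eq, id_eq, norm_of_nonneg h2x.le] at hx
  rw [← log_le_log_iff (by positivity) (by positivity), log_mul (by positivity) (by positivity),
    log_mul (by positivity) (by positivity), log_mul hx0.ne' (by positivity), log_rpow h2x,
    log_rpow four_pos, log_rpow four_pos, log_pow]
  linarith [le_norm_self ((√(2 * x) + (c + 1 : ℝ)) * log (2 * x))]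

theorem eventually_mul_pow_mul_pow_le_four_pow (c : ℕ) :
    ∀ᶠ n : ℕ in atTop,
      n * (2 * n) ^ Nat.sqrt (2 * n) * 4 ^ (2 * n / 3) * (2 * n) ^ c ≤ 4 ^ n := by
  filter_upwards [tendsto_natCast_atTop_atTop.eventually
    (eventually_mul_rpow_mul_pow_le_four_rpow c), eventually_ge_atTop 1] with n hn hn1
  rw [← Nat.cast_le (α := ℝ)]
  push_cast
  rw [← rpow_natCast 4 n, ← rpow_natCast _ (Nat.sqrt _), ← rpow_natCast 4 (_ / 3)]
  refine le_trans ?_ hn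
  gcongr
  · exact_mod_cast Nat.mul_pos two_pos hn1
  · exact_mod_cast Real.nat_sqrt_le_real_sqrt
  · norm_num1
  · exact Nat.cast_div_le.trans (by norm_cast)

theorem prod_pow_factorization_choose_le_mul_four_pow {N : ℕ} (k m : ℕ) (hN : 0 < N) :
    ∏ p ∈ range (m + 1), p ^ (N.choose k).factorization p ≤ N ^ Nat.sqrt N * 4 ^ m := by
  set f : ℕ → ℕ := fun p => p ^ (N.choose k).factorization p
  set S := {p ∈ range (m + 1) | p.Prime}
  have hS : ∏ p ∈ S, f p = ∏ p ∈ range (m + 1), f p := by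
    refine prod_filter_of_ne fun p _ h => ?_
    contrapose h
    simp only [f, Nat.factorization_eq_zero_of_not_prime _ h, pow_zero]
  rw [← hS, ← prod_filter_mul_prod_filter_not S (· ≤ Nat.sqrt N)]
  gcongr
  · refine (prod_le_pow_card _ _ _ fun p _ => Nat.pow_factorization_choose_le hN).trans ?_
    refine pow_right_mono₀ hN ((card_le_card fun p hp => ?_).trans_eq (Nat.card_Icc 1 _))
    simp only [S, mem_filter] at hp
    exact mem_Icc.mpr ⟨hp.1.2.one_le, hp.2⟩
  · calc ∏ p ∈ S with ¬p ≤ Nat.sqrt N, f p ≤ ∏ p ∈ S with ¬p ≤ Nat.sqrt N, p := by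
          refine prod_le_prod' fun p hp => ?_
          simp only [S, mem_filter, not_le] at hp
          exact (pow_le_pow_right₀ hp.1.2.one_le
            (Nat.factorization_choose_le_one (Nat.sqrt_lt'.mp hp.2))).trans_eq (pow_one p)
      _ ≤ ∏ p ∈ S, p := prod_le_prod_of_subset_of_one_le' (filter_subset _ _)
          fun p hp _ => (mem_filter.mp hp).2.one_le
      _ ≤ 4 ^ m := primorial_le_four_pow m

theorem prod_Ico_pow_factorization_centralBinom_le {n : ℕ} (hn : 2 < n) :
    ∏ p ∈ Ico (2 * n / 3 + 1) (2 * n + 1), p ^ (centralBinom n).factorization p ≤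
      (2 * n) ^ (primeCounting (2 * n) - primeCounting n) := by
  set f : ℕ → ℕ := fun p => p ^ (centralBinom n).factorization p
  have hsub : Nat.primesLE n ⊆ Nat.primesLE (2 * n) := Nat.primesLE_mono (by omega)
  have hlarge : Nat.primesLE (2 * n) \ Nat.primesLE n ⊆ Ico (2 * n / 3 + 1) (2 * n + 1) := by
    intro p hp
    obtain ⟨⟨hp2n, hp_prime⟩, hpn⟩ := (mem_sdiff.mp hp).imp_left Nat.mem_primesLE.mp
    have : n < p := by_contra fun h => hpn (Nat.mem_primesLE.mpr ⟨by omega, hp_prime⟩)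
    exact mem_Ico.mpr ⟨by omega, by omega⟩
  rw [← prod_subset hlarge fun p hp hpt => ?_]
  · calc ∏ p ∈ Nat.primesLE (2 * n) \ Nat.primesLE n, f p
        ≤ (2 * n) ^ #(Nat.primesLE (2 * n) \ Nat.primesLE n) :=
          prod_le_pow_card _ _ _ fun p _ => Nat.pow_factorization_choose_le (by omega)
      _ = (2 * n) ^ (primeCounting (2 * n) - primeCounting n) := by
          rw [card_sdiff_of_subset hsub, Nat.primesLE_card_eq_primeCounting,
            Nat.primesLE_card_eq_primeCounting]
  · rw [mem_Ico] at hp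
    by_cases hp_prime : p.Prime
    · have hpn : p ∈ Nat.primesLE n := by_contra fun h =>
        hpt (mem_sdiff.mpr ⟨Nat.mem_primesLE.mpr ⟨by omega, hp_prime⟩, h⟩)
      rw [Nat.factorization_centralBinom_of_two_mul_self_lt_three_mul hn
        (Nat.mem_primesLE.mp hpn).1 (by omega), pow_zero]
    · rw [Nat.factorization_eq_zero_of_not_prime _ hp_prime, pow_zero]

theorem centralBinom_le_mul_pow_primeCounting_sub {n : ℕ} (hn : 2 < n) :
    centralBinom n ≤
      (2 * n) ^ Nat.sqrt (2 * n) * 4 ^ (2 * n / 3) *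
        (2 * n) ^ (primeCounting (2 * n) - primeCounting n) := by
  rw [← Nat.prod_pow_factorization_centralBinom,
    ← prod_range_mul_prod_Ico _ (by omega : 2 * n / 3 + 1 ≤ 2 * n + 1)]
  exact Nat.mul_le_mul (prod_pow_factorization_choose_le_mul_four_pow _ _ (by omega))
    (prod_Ico_pow_factorization_centralBinom_le hn)

theorem tendsto_primeCounting_two_mul_sub :
    Tendsto (fun n => primeCounting (2 * n) - primeCounting n) atTop atTop := by
  refine tendsto_atTop.mpr fun c => ?_
  filter_upwards [eventually_mul_pow_mul_pow_le_four_pow c, eventually_ge_atTop 4]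
    with n hbound hn
  by_contra! hc
  refine (Nat.four_pow_lt_mul_centralBinom n hn).not_ge ?_
  calc n * centralBinom n
      ≤ n * ((2 * n) ^ Nat.sqrt (2 * n) * 4 ^ (2 * n / 3) *
          (2 * n) ^ (primeCounting (2 * n) - primeCounting n)) :=
        Nat.mul_le_mul_left n (centralBinom_le_mul_pow_primeCounting_sub (by omega))
    _ ≤ n * ((2 * n) ^ Nat.sqrt (2 * n) * 4 ^ (2 * n / 3) * (2 * n) ^ c) := by
        gcongr
        omega
    _ ≤ 4 ^ n := by rw [← mul_assoc, ← mul_assoc]; exact hbound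

theorem tendsto_primeCounting_sub_div_two :
    Tendsto (fun m => primeCounting m - primeCounting (m / 2)) atTop atTop :=
  tendsto_atTop_mono
    (fun m => Nat.sub_le_sub_right (Nat.monotone_primeCounting (Nat.mul_div_le m 2)) _)
    (tendsto_primeCounting_two_mul_sub.comp (Nat.tendsto_div_const_atTop two_ne_zero))

theorem pi'_sub_pi'_div_two (x : ℝ) :
    pi' x - pi' (x / 2) = primeCounting ⌊x⌋₊ - primeCounting (⌊x⌋₊ / 2) := by
  rw [pi', pi', Nat.floor_div_ofNat]

theorem forall_le_pi'_sub_iff (n R : ℕ) :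
    (∀ x : ℝ, (R : ℝ) ≤ x → n ≤ pi' x - pi' (x / 2)) ↔
      ∀ m : ℕ, R ≤ m → n ≤ primeCounting m - primeCounting (m / 2) := by
  simp only [pi'_sub_pi'_div_two]
  refine ⟨fun h m hm => ?_, fun h x hx => h _ (Nat.le_floor hx)⟩
  simpa using h m (by exact_mod_cast hm)

def ramanujanBounds (n : ℕ) : Set ℕ :=
  {R | 0 < R ∧ ∀ m, R ≤ m → n ≤ primeCounting m - primeCounting (m / 2)}

theorem ramanujanPrime_eq_sInf (n : ℕ) : ramanujanPrime n = sInf (ramanujanBounds n) := by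
  simp only [ramanujanPrime, ramanujanBounds, forall_le_pi'_sub_iff]

theorem ramanujanPrime_mem_ramanujanBounds (n : ℕ) : ramanujanPrime n ∈ ramanujanBounds n := by
  obtain ⟨R, hR⟩ := tendsto_atTop_atTop.mp tendsto_primeCounting_sub_div_two n
  rw [ramanujanPrime_eq_sInf]
  exact Nat.sInf_mem ⟨R + 1, R.succ_pos, fun m hm => hR m (by omega)⟩

theorem ramanujanPrime_le {n R : ℕ} (hR : R ∈ ramanujanBounds n) : ramanujanPrime n ≤ R := by
  rw [ramanujanPrime_eq_sInf]
  exact Nat.sInf_le hR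

theorem ramanujanPrime_mono : Monotone ramanujanPrime := fun _ b hab =>
  have hb := ramanujanPrime_mem_ramanujanBounds b
  ramanujanPrime_le ⟨hb.1, fun m hm => hab.trans (hb.2 m hm)⟩

theorem one_lt_ramanujanPrime_one : 1 < ramanujanPrime 1 := by
  by_contra! hle
  have := (ramanujanPrime_mem_ramanujanBounds 1).2 1 hle
  simp at this

theorem primeCounting_succ_le (n : ℕ) : primeCounting (n + 1) ≤ primeCounting n + 1 := by
  rw [← Nat.primesLE_card_eq_primeCounting, ← Nat.primesLE_card_eq_primeCounting,
    Nat.primesLE_succ]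
  split_ifs
  exacts [card_insert_le _ _, Nat.le_succ _]

theorem ramanujanPrime_lt_succ (n : ℕ) : ramanujanPrime n < ramanujanPrime (n + 1) := by
  set R := ramanujanPrime (n + 1)
  have hR : 1 < R := one_lt_ramanujanPrime_one.trans_le (ramanujanPrime_mono (by omega))
  have hspec := (ramanujanPrime_mem_ramanujanBounds (n + 1)).2
  suffices ramanujanPrime n ≤ R - 1 by omega
  refine ramanujanPrime_le ⟨by omega, fun m hm => ?_⟩
  rcases hm.lt_or_eq with hm | rfl
  · exact (hspec m (by omega)).trans' n.le_succ
  · -- Going down from `R` to `R - 1` loses at most the prime `R` and gains nothing below `R / 2`.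
    have hsucc := primeCounting_succ_le (R - 1)
    have hhalf := Nat.monotone_primeCounting (Nat.div_le_div_right (c := 2) (Nat.sub_le R 1))
    have := hspec R le_rfl
    rw [Nat.sub_add_cancel hR.le] at hsucc
    omega

theorem ramanujanPrime_strictMono : StrictMono ramanujanPrime :=
  strictMono_nat_of_lt_succ ramanujanPrime_lt_succ

theorem piR_eq_ncard (x : ℝ) :
    piR x = {n : ℕ | 1 ≤ n ∧ (ramanujanPrime n : ℝ) ≤ x}.ncard := by
  rw [← Set.ncard_image_of_injective _ ramanujanPrime_strictMono.injective, piR]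
  congr 1
  ext R
  simp only [IsRamanujanPrime, Set.mem_ofPred_eq, Set.mem_image]
  constructor
  · rintro ⟨⟨n, hn, rfl⟩, hx⟩
    exact ⟨n, ⟨hn, hx⟩, rfl⟩
  · rintro ⟨n, ⟨hn, hx⟩, rfl⟩
    exact ⟨⟨n, hn, rfl⟩, hx⟩

theorem piR_le_iff (j : ℕ) (x : ℝ) : piR x ≤ j ↔ x < ramanujanPrime (j + 1) := by
  have hmono := ramanujanPrime_strictMono
  rw [piR_eq_ncard]
  constructor
  · intro h
    by_contra! hx
    have hfin : {n : ℕ | 1 ≤ n ∧ (ramanujanPrime n : ℝ) ≤ x}.Finite :=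
      (Set.finite_Iic ⌊x⌋₊).subset fun n hn =>
        Nat.le_floor ((Nat.cast_le.mpr (hmono.id_le n)).trans hn.2)
    have hIcc : Set.Icc 1 (j + 1) ⊆ {n : ℕ | 1 ≤ n ∧ (ramanujanPrime n : ℝ) ≤ x} :=
      fun n hn => ⟨hn.1, le_trans (Nat.cast_le.mpr (hmono.monotone hn.2)) hx⟩
    have := Set.ncard_le_ncard hIcc hfin
    rw [Set.ncard_Icc_nat] at this
    omega
  · intro hx
    have hIcc : {n : ℕ | 1 ≤ n ∧ (ramanujanPrime n : ℝ) ≤ x} ⊆ Set.Icc 1 j := fun n hn =>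
      ⟨hn.1, Nat.lt_succ_iff.mp (hmono.lt_iff_lt.mp (Nat.cast_lt.mp (hn.2.trans_lt hx)))⟩
    simpa using Set.ncard_le_ncard hIcc

theorem piR_eq_of_mem_Ico {j : ℕ} {x : ℝ} (h₁ : (ramanujanPrime j : ℝ) ≤ x)
    (h₂ : x < ramanujanPrime (j + 1)) : piR x = j := by
  refine le_antisymm ((piR_le_iff j x).mpr h₂) ?_
  rcases j with _ | j
  · exact Nat.zero_le _
  · exact not_le.mp fun h => ((piR_le_iff j x).mp h).not_ge h₁

theorem ramanujan_segal_equivalence (k l : ℕ) (hk : 1 ≤ k) (hl : 1 ≤ l) :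
    ramanujanPrime k + ramanujanPrime l ≤ ramanujanPrime (k + l - 1) ↔
      ∀ x y : ℝ, (ramanujanPrime (k - 1) : ℝ) ≤ x → x < ramanujanPrime k →
        (ramanujanPrime (l - 1) : ℝ) ≤ y → y < ramanujanPrime l →
          piR (x + y) ≤ piR x + piR y := by
  obtain ⟨k, rfl⟩ := Nat.exists_eq_add_of_le' hk
  obtain ⟨l, rfl⟩ := Nat.exists_eq_add_of_le' hl
  rw [Nat.add_sub_cancel, Nat.add_sub_cancel, show k + 1 + (l + 1) - 1 = k + l + 1 by omega]
  have hgap (j : ℕ) : (ramanujanPrime j : ℝ) + 1 ≤ ramanujanPrime (j + 1) := by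
    exact_mod_cast ramanujanPrime_lt_succ j
  constructor
  · intro h x y hx₁ hx₂ hy₁ hy₂
    rw [piR_eq_of_mem_Ico hx₁ hx₂, piR_eq_of_mem_Ico hy₁ hy₂, piR_le_iff]
    have : (ramanujanPrime (k + 1) : ℝ) + ramanujanPrime (l + 1) ≤ ramanujanPrime (k + l + 1) := by
      exact_mod_cast h
    linarith
  · intro h
    set x : ℝ := ramanujanPrime (k + 1) - 1 / 2 with hx
    set y : ℝ := ramanujanPrime (l + 1) - 1 / 2 with hy
    have hx₁ : (ramanujanPrime k : ℝ) ≤ x := by linarith [hgap k]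
    have hx₂ : x < ramanujanPrime (k + 1) := by linarith
    have hy₁ : (ramanujanPrime l : ℝ) ≤ y := by linarith [hgap l]
    have hy₂ : y < ramanujanPrime (l + 1) := by linarith
    have hxy := h x y hx₁ hx₂ hy₁ hy₂
    rw [piR_eq_of_mem_Ico hx₁ hx₂, piR_eq_of_mem_Ico hy₁ hy₂, piR_le_iff] at hxy
    have : (ramanujanPrime (k + 1) + ramanujanPrime (l + 1) : ℝ) <
        ramanujanPrime (k + l + 1) + 1 := by
      linarith
    exact Nat.lt_succ_iff.mp (by exact_mod_cast this)
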